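/- (i) Every finite semigroup S satisfies an identity of the form x^t = x^{2t} for some positive integer t; in particular, for a finite ring R both (R,·) and (R,∘) satisfy such an identity. (ii) If R is a finite ring in which every idempotent is central, then R satisfies a reduced semigroup identity, namely x^t y = y x^t for some positive integer t. -/
import Mathlib


/-- The circle operation `x ∘ y = x + y + x * y`. -/
def circleOp {R : Type*} [Add R] [Mul R] (a b : R) : R := a + b + a * b
/-- `opow op x t` is the `t`-th power `x^t` of `x` with respect to the binary operation
`op`, for `t ≥ 1` (with the junk value `x = x^1` at `t = 0`). -/
def opow {S : Type*} (op : S → S → S) (x : S) (t : ℕ) : S := (fun a => op a x)^[t - 1] x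

section Aux
variable {S : Type*} [Semigroup S]

lemma opow_one (x : S) : opow (· * ·) x 1 = x := rfl

lemma opow_succ (x : S) (t : ℕ) (ht : 1 ≤ t) :
    opow (· * ·) x (t + 1) = opow (· * ·) x t * x := by
  obtain ⟨s, rfl⟩ := Nat.exists_eq_add_of_le ht
  show (fun a => a * x)^[1 + s + 1 - 1] x = (fun a => a * x)^[1 + s - 1] x * x
  simp only [Nat.add_sub_cancel, Nat.add_comm 1 s]
  rw [Function.iterate_succ_apply']

lemma opow_add (x : S) (m n : ℕ) (hm : 1 ≤ m) (hn : 1 ≤ n) :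
    opow (· * ·) x (m + n) = opow (· * ·) x m * opow (· * ·) x n := by
  induction n with
  | zero => omega
  | succ n ih =>
    rcases Nat.lt_or_ge n 1 with h | h
    · interval_cases n
      rw [opow_succ x m hm, opow_one]
    · rw [← Nat.add_assoc, opow_succ x (m + n) (by omega), ih h,
        opow_succ x n h, mul_assoc]

/-- From `x^a = x^b` (with `1 ≤ a < b`) we get `x^(a+c) = x^(b+c)`. -/
lemma opow_shift (x : S) (a b c : ℕ) (ha : 1 ≤ a) (hb : 1 ≤ b)
    (h : opow (· * ·) x a = opow (· * ·) x b) :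
    opow (· * ·) x (a + c) = opow (· * ·) x (b + c) := by
  rcases Nat.eq_zero_or_pos c with rfl | hc
  · simpa using h
  · rw [opow_add x a c ha hc, opow_add x b c hb hc, h]

/-- Eventual periodicity: `x^j = x^(j + s*m)` whenever `x^m = x^(2m)` and `m ≤ j`. -/
lemma opow_periodic (x : S) (m : ℕ) (hm : 1 ≤ m)
    (h : opow (· * ·) x m = opow (· * ·) x (2 * m)) (s j : ℕ) (hj : m ≤ j) :
    opow (· * ·) x j = opow (· * ·) x (j + s * m) := by
  induction s with
  | zero => simp
  | succ s ih =>
    rw [ih]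
    have e1 : (s + 1) * m = s * m + m := by ring
    have : j + (s + 1) * m = (2 * m) + (j + s * m - m) := by omega
    rw [this, ← opow_shift x m (2 * m) (j + s * m - m) hm (by omega) h]
    congr 1
    omega

lemma opow_stable (x : S) (m t : ℕ) (hm : 1 ≤ m)
    (h : opow (· * ·) x m = opow (· * ·) x (2 * m)) (hmt : m ∣ t) (hle : m ≤ t) :
    opow (· * ·) x t = opow (· * ·) x (2 * t) := by
  have := opow_periodic x m hm h (t / m) t hle
  rw [two_mul]
  rwa [Nat.div_mul_cancel hmt] at this

end Aux

/-- Every finite associative magma satisfies `x^t = x^(2t)` for some `t ≥ 1`. -/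
lemma key {S : Type} [Finite S] (op : S → S → S)
    (assoc : ∀ a b c, op (op a b) c = op a (op b c)) :
    ∃ t : ℕ, 1 ≤ t ∧ ∀ x : S, opow op x t = opow op x (2 * t) := by
  letI : Mul S := ⟨op⟩
  letI : Semigroup S := ⟨assoc⟩
  have hop : op = (· * ·) := rfl
  rw [hop]
  -- per-element exponent
  have hx : ∀ x : S, ∃ m : ℕ, 1 ≤ m ∧ opow (· * ·) x m = opow (· * ·) x (2 * m) := by
    intro x
    obtain ⟨i, j, hij, hval⟩ :=
      Finite.exists_ne_map_eq_of_infinite (fun n : ℕ => opow (· * ·) x (n + 1))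
    wlog hlt : i < j generalizing i j
    · exact this j i hij.symm hval.symm (by omega)
    set a := i + 1; set b := j + 1
    have ha : 1 ≤ a := by omega
    have hb : 1 ≤ b := by omega
    have hab : a < b := by omega
    refine ⟨a * (b - a), Nat.mul_pos (by omega) (by omega), ?_⟩
    have key1 : ∀ c : ℕ, opow (· * ·) x (a + c) = opow (· * ·) x (b + c) :=
      fun c => opow_shift x a b c ha hb hval
    -- period p := b - a starting at a
    have hper : ∀ s j : ℕ, a ≤ j → opow (· * ·) x j = opow (· * ·) x (j + s * (b - a)) := by
      intro s
      induction s with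
      | zero => simp
      | succ s ih =>
        intro j hj
        rw [ih j hj]
        have e1 : (s + 1) * (b - a) = s * (b - a) + (b - a) := by ring
        have h1 : j + s * (b - a) = a + (j + s * (b - a) - a) := by omega
        have h2 : j + (s + 1) * (b - a) = b + (j + s * (b - a) - a) := by omega
        rw [h1, h2, key1]
    have h := hper a (a * (b - a)) (Nat.le_mul_of_pos_right a (by omega))
    rw [h]; congr 1; ring
  choose m hm1 hm2 using hx
  cases nonempty_fintype S
  refine ⟨∏ x : S, m x, Finset.one_le_prod' (fun x _ => hm1 x), fun x => ?_⟩
  exact opow_stable x (m x) _ (hm1 x) (hm2 x)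
    (Finset.dvd_prod_of_mem m (Finset.mem_univ x))
    (Finset.single_le_prod' (fun y _ => hm1 y) (Finset.mem_univ x))

lemma circle_assoc {R : Type*} [NonUnitalRing R] (a b c : R) :
    circleOp (circleOp a b) c = circleOp a (circleOp b c) := by
  simp only [circleOp, add_mul, mul_add, mul_assoc]
  abel


/-- Final Proposition:
(i) every finite semigroup `S` satisfies an identity `x^t = x^{2t}` for some `t ≥ 1`;
in particular, for a finite (not necessarily unital) ring `R`, both the multiplicative
semigroup `(R,·)` and the circle semigroup `(R,∘)` satisfy such an identity;
(ii) if `R` is a finite ring all of whose idempotents are central, then `R` satisfies the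
reduced semigroup identity `x^t y = y x^t` for some `t ≥ 1`. -/
theorem finite_semigroup_identities :
    (∀ (S : Type) [Semigroup S] [Finite S],
      ∃ t : ℕ, 1 ≤ t ∧ ∀ x : S, opow (· * ·) x t = opow (· * ·) x (2 * t)) ∧
    (∀ (R : Type) [NonUnitalRing R] [Finite R],
      ∃ t : ℕ, 1 ≤ t ∧
        (∀ x : R, opow (· * ·) x t = opow (· * ·) x (2 * t)) ∧
        (∀ x : R, opow circleOp x t = opow circleOp x (2 * t))) ∧
    (∀ (R : Type) [NonUnitalRing R] [Finite R],
      (∀ e : R, e * e = e → ∀ r : R, e * r = r * e) →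
      ∃ t : ℕ, 1 ≤ t ∧ ∀ x y : R, opow (· * ·) x t * y = y * opow (· * ·) x t) := by
  refine ⟨fun S _ _ => key _ mul_assoc, fun R _ _ => ?_, fun R _ _ h => ?_⟩
  · obtain ⟨t1, ht1, h1⟩ := key (· * · : R → R → R) mul_assoc
    obtain ⟨t2, ht2, h2⟩ := key (circleOp : R → R → R) circle_assoc
    refine ⟨t1 * t2, Nat.mul_pos ht1 ht2, fun x => ?_, fun x => ?_⟩
    · exact opow_stable x t1 _ ht1 (h1 x) ⟨t2, rfl⟩ (Nat.le_mul_of_pos_right t1 ht2)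
    · letI : Mul R := ⟨circleOp⟩
      letI : Semigroup R := ⟨circle_assoc⟩
      exact opow_stable (S := R) x t2 _ ht2 (h2 x) ⟨t1, mul_comm t1 t2⟩
        (Nat.le_mul_of_pos_left t2 ht1)
  · obtain ⟨t, ht, h1⟩ := key (· * · : R → R → R) mul_assoc
    refine ⟨t, ht, fun x y => ?_⟩
    have hidem : opow (· * ·) x t * opow (· * ·) x t = opow (· * ·) x t := by
      rw [← opow_add x t t ht ht, ← two_mul, ← h1 x]
    exact h _ hidem y
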